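/- The short-regression coefficient decomposes, without any independence assumptions, as Δ_short = Δ_dce^s + Δ_ind^s + Δ_sel^s, where Δ_dce^s = Σ_{a∈𝒜} π_1(a)·E[Y(1,a)−Y(0,a) | D=1, A=a], Δ_ind^s = Σ_{a∈𝒜} (π_1(a)−π_0(a))·(E[Y(0,a) | D=0, A=a] − E[Y(0,0) | D=0, A=0]), and Δ_sel^s = Σ_{a∈𝒜} π_1(a)·(E[Y(0,a) | D=1, A=a] − E[Y(0,a) | D=0, A=a]). -/

import Mathlib

open MeasureTheory ProbabilityTheory BigOperators

noncomputable section

variable {Ω : Type} [MeasurableSpace Ω] {K : ℕ}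

/-- Expectation of a real-valued random variable. -/
def Exp (P : Measure Ω) (Z : Ω → ℝ) : ℝ := ∫ ω, Z ω ∂P

/-- Probability of an event, as a real number. -/
def Pr (P : Measure Ω) (s : Set Ω) : ℝ := (P s).toReal

/-- Conditional expectation given an event, defined as a ratio. -/
def CE (P : Measure Ω) (Z : Ω → ℝ) (s : Set Ω) : ℝ :=
  Exp P (fun ω => Z ω * s.indicator (fun _ => (1:ℝ)) ω) / Pr P s

/-- Covariance of two real-valued random variables. -/
def Cov (P : Measure Ω) (Z W : Ω → ℝ) : ℝ :=
  Exp P (fun ω => Z ω * W ω) - Exp P Z * Exp P W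

/-- The event {D = d, A = a}. -/
def evDA (D : Ω → ℕ) (A : Ω → Fin K → ℕ) (d : ℕ) (a : Fin K → ℕ) : Set Ω :=
  {ω | D ω = d ∧ A ω = a}

/-- The event {D = d}. -/
def evD (D : Ω → ℕ) (d : ℕ) : Set Ω := {ω | D ω = d}

/-- The event {A = a}. -/
def evA (A : Ω → Fin K → ℕ) (a : Fin K → ℕ) : Set Ω := {ω | A ω = a}

/-- π_d(a) = P(A = a | D = d). -/
def piP (P : Measure Ω) (D : Ω → ℕ) (A : Ω → Fin K → ℕ) (d : ℕ) (a : Fin K → ℕ) : ℝ :=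
  Pr P (evDA D A d a) / Pr P (evD D d)

/-- The observed outcome Y = Σ_{(d,a)} Y(d,a)·1{D=d, A=a}. -/
def Yobs (D : Ω → ℕ) (A : Ω → Fin K → ℕ) (𝒜 : Finset (Fin K → ℕ))
    (Ypot : ℕ → (Fin K → ℕ) → Ω → ℝ) : Ω → ℝ :=
  fun ω => ∑ d ∈ ({0, 1} : Finset ℕ), ∑ a ∈ 𝒜,
    Ypot d a ω * (if D ω = d ∧ A ω = a then (1:ℝ) else 0)

/-- μ(d,a) = E[Y(d,a)]. -/
def muP (P : Measure Ω) (Ypot : ℕ → (Fin K → ℕ) → Ω → ℝ) (d : ℕ) (a : Fin K → ℕ) : ℝ :=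
  Exp P (Ypot d a)

/-- The random vector (D, A) as a real-valued family indexed by Unit ⊕ Fin K. -/
def DAvec (D : Ω → ℕ) (A : Ω → Fin K → ℕ) : Unit ⊕ Fin K → Ω → ℝ :=
  Sum.elim (fun _ ω => (D ω : ℝ)) (fun j ω => (A ω j : ℝ))

/-- The (K+1)×(K+1) covariance matrix of (D, A). -/
def covDAmat (P : Measure Ω) (D : Ω → ℕ) (A : Ω → Fin K → ℕ) :
    Matrix (Unit ⊕ Fin K) (Unit ⊕ Fin K) ℝ :=
  Matrix.of fun i j => Cov P (DAvec D A i) (DAvec D A j)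

/-- The K×K covariance matrix Var(A). -/
def varAmat (P : Measure Ω) (A : Ω → Fin K → ℕ) : Matrix (Fin K) (Fin K) ℝ :=
  Matrix.of fun i j => Cov P (fun ω => (A ω i : ℝ)) (fun ω => (A ω j : ℝ))

/-- The row vector Cov(D, A). -/
def covDA (P : Measure Ω) (D : Ω → ℕ) (A : Ω → Fin K → ℕ) : Fin K → ℝ :=
  fun j => Cov P (fun ω => (D ω : ℝ)) (fun ω => (A ω j : ℝ))

/-- M = Cov(D,A) ⬝ Var(A)⁻¹. -/
def Mlong (P : Measure Ω) (D : Ω → ℕ) (A : Ω → Fin K → ℕ) : Fin K → ℝ :=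
  fun j => ∑ i, covDA P D A i * (varAmat P A)⁻¹ i j

/-- Var(D). -/
def varD (P : Measure Ω) (D : Ω → ℕ) : ℝ :=
  Cov P (fun ω => (D ω : ℝ)) (fun ω => (D ω : ℝ))

/-- denom = Var(D) − Cov(D,A)·Var(A)⁻¹·Cov(A,D). -/
def denomL (P : Measure Ω) (D : Ω → ℕ) (A : Ω → Fin K → ℕ) : ℝ :=
  varD P D - ∑ j, Mlong P D A j * covDA P D A j

/-- The long-regression weight ω_dce^l(a). -/
def wdceL (P : Measure Ω) (D : Ω → ℕ) (A : Ω → Fin K → ℕ) (a : Fin K → ℕ) : ℝ :=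
  piP P D A 1 a *
    (varD P D - Pr P (evD D 1) *
      ∑ j, Mlong P D A j * ((a j : ℝ) - Exp P (fun ω => (A ω j : ℝ)))) / denomL P D A

/-- The long-regression weight ω_ind^l(a). -/
def windL (P : Measure Ω) (D : Ω → ℕ) (A : Ω → Fin K → ℕ) (a : Fin K → ℕ) : ℝ :=
  (varD P D * (piP P D A 1 a - piP P D A 0 a) -
    Pr P (evA A a) * ∑ j, Mlong P D A j * ((a j : ℝ) - Exp P (fun ω => (A ω j : ℝ))))
  / denomL P D A

/-- The residual of the long regression of Y on (1, D, A). -/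
def residLong (D : Ω → ℕ) (A : Ω → Fin K → ℕ) (𝒜 : Finset (Fin K → ℕ))
    (Ypot : ℕ → (Fin K → ℕ) → Ω → ℝ) (Δ θ₀ : ℝ) (θ : Fin K → ℝ) : Ω → ℝ :=
  fun ω => Yobs D A 𝒜 Ypot ω - Δ * (D ω : ℝ) - θ₀ - ∑ j, θ j * (A ω j : ℝ)

/-- The random vector W = (A, A·D) as a real-valued family indexed by Fin K ⊕ Fin K. -/
def Wvec (D : Ω → ℕ) (A : Ω → Fin K → ℕ) : Fin K ⊕ Fin K → Ω → ℝ :=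
  Sum.elim (fun j ω => (A ω j : ℝ)) (fun j ω => (A ω j : ℝ) * (D ω : ℝ))

/-- The 2K×2K covariance matrix Var(W), W = (A, AD). -/
def varWmat (P : Measure Ω) (D : Ω → ℕ) (A : Ω → Fin K → ℕ) :
    Matrix (Fin K ⊕ Fin K) (Fin K ⊕ Fin K) ℝ :=
  Matrix.of fun u v => Cov P (Wvec D A u) (Wvec D A v)

/-- The row vector Cov(D, W). -/
def covDW (P : Measure Ω) (D : Ω → ℕ) (A : Ω → Fin K → ℕ) : Fin K ⊕ Fin K → ℝ :=
  fun u => Cov P (fun ω => (D ω : ℝ)) (Wvec D A u)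

/-- M = Cov(D,W) ⬝ Var(W)⁻¹ for the interaction regression. -/
def Minter (P : Measure Ω) (D : Ω → ℕ) (A : Ω → Fin K → ℕ) : Fin K ⊕ Fin K → ℝ :=
  fun v => ∑ u, covDW P D A u * (varWmat P D A)⁻¹ u v

/-- denom = Var(D) − M·Cov(W,D) for the interaction regression. -/
def denomI (P : Measure Ω) (D : Ω → ℕ) (A : Ω → Fin K → ℕ) : ℝ :=
  varD P D - ∑ v, Minter P D A v * covDW P D A v

/-- E[A_j | D = 1]. -/
def condA1 (P : Measure Ω) (D : Ω → ℕ) (A : Ω → Fin K → ℕ) (j : Fin K) : ℝ :=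
  CE P (fun ω => (A ω j : ℝ)) (evD D 1)

/-- The random vector (D, A, AD) as a real-valued family. -/
def DADvec (D : Ω → ℕ) (A : Ω → Fin K → ℕ) : Unit ⊕ (Fin K ⊕ Fin K) → Ω → ℝ :=
  Sum.elim (fun _ ω => (D ω : ℝ)) (Wvec D A)

/-- The (2K+1)×(2K+1) covariance matrix of (D, A, AD). -/
def covDADmat (P : Measure Ω) (D : Ω → ℕ) (A : Ω → Fin K → ℕ) :
    Matrix (Unit ⊕ (Fin K ⊕ Fin K)) (Unit ⊕ (Fin K ⊕ Fin K)) ℝ :=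
  Matrix.of fun i j => Cov P (DADvec D A i) (DADvec D A j)

/-- The interaction-regression weight ω_dce^i(a). -/
def wdceI (P : Measure Ω) (D : Ω → ℕ) (A : Ω → Fin K → ℕ) (a : Fin K → ℕ) : ℝ :=
  piP P D A 1 a *
    (varD P D
      - Pr P (evD D 1) *
          ∑ j, Minter P D A (Sum.inl j) * ((a j : ℝ) - Exp P (fun ω => (A ω j : ℝ)))
      - Pr P (evD D 1) *
          ∑ j, Minter P D A (Sum.inr j) * ((a j : ℝ) - Pr P (evD D 1) * condA1 P D A j))
  / denomI P D A

/-- The interaction-regression weight ω_ind^i(a). -/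
def windI (P : Measure Ω) (D : Ω → ℕ) (A : Ω → Fin K → ℕ) (a : Fin K → ℕ) : ℝ :=
  (varD P D * (piP P D A 1 a - piP P D A 0 a)
    - ∑ j, Minter P D A (Sum.inl j) * Pr P (evA A a) * ((a j : ℝ) - Exp P (fun ω => (A ω j : ℝ)))
    - Pr P (evD D 1) *
        ∑ j, Minter P D A (Sum.inr j) *
          (piP P D A 1 a * (a j : ℝ) - Pr P (evA A a) * condA1 P D A j))
  / denomI P D A

/-- The residual of the interaction regression of Y on (1, D, A, AD). -/
def residInter (D : Ω → ℕ) (A : Ω → Fin K → ℕ) (𝒜 : Finset (Fin K → ℕ))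
    (Ypot : ℕ → (Fin K → ℕ) → Ω → ℝ) (Δ θ₀ : ℝ) (θ lam : Fin K → ℝ) : Ω → ℝ :=
  fun ω => Yobs D A 𝒜 Ypot ω - Δ * (D ω : ℝ) - θ₀ - (∑ j, θ j * (A ω j : ℝ))
    - ∑ j, lam j * (A ω j : ℝ) * (D ω : ℝ)

/-- P(D = d | A = a). -/
def condDgivenA (P : Measure Ω) (D : Ω → ℕ) (A : Ω → Fin K → ℕ) (d : ℕ) (a : Fin K → ℕ) : ℝ :=
  Pr P (evDA D A d a) / Pr P (evA A a)

/-- The SFE weight ω_sfe(a). -/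
def wsfe (P : Measure Ω) (D : Ω → ℕ) (A : Ω → Fin K → ℕ) (𝒜 : Finset (Fin K → ℕ))
    (a : Fin K → ℕ) : ℝ :=
  condDgivenA P D A 1 a * condDgivenA P D A 0 a * Pr P (evA A a) /
    ∑ a' ∈ 𝒜, condDgivenA P D A 1 a' * condDgivenA P D A 0 a' * Pr P (evA A a')

/-- The residual of the SFE regression of Y on (D, {1{A=a}}). -/
def residSFE (D : Ω → ℕ) (A : Ω → Fin K → ℕ) (𝒜 : Finset (Fin K → ℕ))
    (Ypot : ℕ → (Fin K → ℕ) → Ω → ℝ) (Δ : ℝ) (θ : (Fin K → ℕ) → ℝ) : Ω → ℝ :=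
  fun ω => Yobs D A 𝒜 Ypot ω - Δ * (D ω : ℝ) -
    ∑ a ∈ 𝒜, θ a * (if A ω = a then (1:ℝ) else 0)

/-- The residual of the saturated regression of Y on ({1{A=a}}, {D·1{A=a}}). -/
def residSAT (D : Ω → ℕ) (A : Ω → Fin K → ℕ) (𝒜 : Finset (Fin K → ℕ))
    (Ypot : ℕ → (Fin K → ℕ) → Ω → ℝ) (γ Δsat : (Fin K → ℕ) → ℝ) : Ω → ℝ :=
  fun ω => Yobs D A 𝒜 Ypot ω - (∑ a ∈ 𝒜, γ a * (if A ω = a then (1:ℝ) else 0)) -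
    ∑ a ∈ 𝒜, Δsat a * (D ω : ℝ) * (if A ω = a then (1:ℝ) else 0)

/-!
Splitting `{D = d}` into the cells `{D = d, A = a}` writes `E[Y | D = d]` as the `π_d`-weighted
mean of the cell means `E[Y(d,a) | D = d, A = a]`. The decomposition is then pure algebra: add
and subtract the counterfactual means `E[Y(0,a) | D = 1, A = a]`; the baseline
`E[Y(0,0) | D = 0, A = 0]` enters with total weight `Σ_a (π₁(a) - π₀(a)) = 1 - 1 = 0`.
-/

theorem Pr_eq_measureReal (P : Measure Ω) (s : Set Ω) : Pr P s = P.real s := rfl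

theorem CE_eq_setIntegral_div {P : Measure Ω} {s : Set Ω} (hs : MeasurableSet s) (Z : Ω → ℝ) :
    CE P Z s = (∫ ω in s, Z ω ∂P) / Pr P s := by
  unfold CE Exp
  simp only [mul_comm (Z _), ← Set.indicator_mul_left, one_mul, integral_indicator hs]

theorem CE_sub {P : Measure Ω} {s : Set Ω} {Z W : Ω → ℝ} (hs : MeasurableSet s)
    (hZ : IntegrableOn Z s P) (hW : IntegrableOn W s P) :
    CE P (fun ω => Z ω - W ω) s = CE P Z s - CE P W s := by
  simp only [CE_eq_setIntegral_div hs, integral_sub hZ hW, sub_div]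

theorem CE_eq_sum_of_partition {ι : Type*} {P : Measure Ω} {Z : Ω → ℝ} {s : Set Ω}
    {I : Finset ι} {t : ι → Set Ω} {Zt : ι → Ω → ℝ} (hst : s = ⋃ i ∈ I, t i)
    (hdisj : (I : Set ι).PairwiseDisjoint t) (ht : ∀ i ∈ I, MeasurableSet (t i))
    (hZt : ∀ i ∈ I, Integrable (Zt i) P) (hZ : ∀ i ∈ I, Set.EqOn Z (Zt i) (t i))
    (hpos : ∀ i ∈ I, Pr P (t i) ≠ 0) :
    CE P Z s = ∑ i ∈ I, Pr P (t i) / Pr P s * CE P (Zt i) (t i) := by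
  have hs : MeasurableSet s := hst ▸ Finset.measurableSet_biUnion I ht
  have hZ_on : ∀ i ∈ I, IntegrableOn Z (t i) P := fun i hi =>
    (hZt i hi).integrableOn.congr_fun (hZ i hi).symm (ht i hi)
  rw [CE_eq_setIntegral_div hs, hst, integral_biUnion_finset I ht hdisj hZ_on, ← hst,
    Finset.sum_div]
  refine Finset.sum_congr rfl fun i hi => ?_
  rw [CE_eq_setIntegral_div (ht i hi), ← setIntegral_congr_fun (ht i hi) (hZ i hi)]
  field_simp [hpos i hi]

theorem sum_mul_sub_sum_mul_eq_of_sum_eq_one {ι : Type*} (I : Finset ι)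
    (w₁ w₀ y₁ y₀ c : ι → ℝ) (b : ℝ) (hw₁ : ∑ i ∈ I, w₁ i = 1) (hw₀ : ∑ i ∈ I, w₀ i = 1) :
    ∑ i ∈ I, w₁ i * y₁ i - ∑ i ∈ I, w₀ i * y₀ i
      = ∑ i ∈ I, w₁ i * (y₁ i - c i) + ∑ i ∈ I, (w₁ i - w₀ i) * (y₀ i - b)
        + ∑ i ∈ I, w₁ i * (c i - y₀ i) := by
  simp only [mul_sub, sub_mul, Finset.sum_sub_distrib, ← Finset.sum_mul, hw₁, hw₀]
  ring

section Cells

variable {D : Ω → ℕ} {A : Ω → Fin K → ℕ} {𝒜 : Finset (Fin K → ℕ)}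

theorem measurableSet_evDA (hD : Measurable D) (hA : Measurable A) (d : ℕ) (a : Fin K → ℕ) :
    MeasurableSet (evDA D A d a) :=
  (hD (measurableSet_singleton d)).inter (hA (measurableSet_singleton a))

omit [MeasurableSpace Ω] in
theorem pairwise_disjoint_evDA (d : ℕ) : Pairwise (Function.onFun Disjoint (evDA D A d)) :=
  fun _ _ hab => Set.disjoint_left.2 fun _ h₁ h₂ => hab (h₁.2.symm.trans h₂.2)

omit [MeasurableSpace Ω] in
theorem evD_eq_biUnion_evDA (hAsupp : ∀ ω, A ω ∈ 𝒜) (d : ℕ) :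
    evD D d = ⋃ a ∈ 𝒜, evDA D A d a := by
  ext ω
  simp only [evD, evDA, Set.mem_iUnion, exists_prop]
  exact ⟨fun h => ⟨A ω, hAsupp ω, h, rfl⟩, fun ⟨_, _, h, _⟩ => h⟩

omit [MeasurableSpace Ω] in
theorem Yobs_eq_of_mem_evDA (Ypot : ℕ → (Fin K → ℕ) → Ω → ℝ) {d : ℕ} {a : Fin K → ℕ}
    (hd : d ∈ ({0, 1} : Finset ℕ)) (ha : a ∈ 𝒜) {ω : Ω} (hω : ω ∈ evDA D A d a) :
    Yobs D A 𝒜 Ypot ω = Ypot d a ω := by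
  obtain ⟨hDω, hAω⟩ := hω
  unfold Yobs
  rw [Finset.sum_eq_single_of_mem d hd fun d' _ hd' =>
      Finset.sum_eq_zero fun a' _ => by simp [hDω, Ne.symm hd'],
    Finset.sum_eq_single_of_mem a ha fun a' _ ha' => by simp [hDω, hAω, Ne.symm ha']]
  simp [hDω, hAω]

theorem Pr_evD_eq_sum {P : Measure Ω} [IsFiniteMeasure P] (hD : Measurable D) (hA : Measurable A)
    (hAsupp : ∀ ω, A ω ∈ 𝒜) (d : ℕ) :
    Pr P (evD D d) = ∑ a ∈ 𝒜, Pr P (evDA D A d a) := by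
  simp only [Pr_eq_measureReal, evD_eq_biUnion_evDA hAsupp d]
  exact measureReal_biUnion_finset ((pairwise_disjoint_evDA d).set_pairwise _)
    fun a _ => measurableSet_evDA hD hA d a

theorem CE_Yobs_evD {P : Measure Ω} {Ypot : ℕ → (Fin K → ℕ) → Ω → ℝ} (hD : Measurable D)
    (hA : Measurable A) (hAsupp : ∀ ω, A ω ∈ 𝒜) {d : ℕ} (hd : d ∈ ({0, 1} : Finset ℕ))
    (hInt : ∀ a ∈ 𝒜, Integrable (Ypot d a) P) (hpos : ∀ a ∈ 𝒜, Pr P (evDA D A d a) ≠ 0) :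
    CE P (Yobs D A 𝒜 Ypot) (evD D d)
      = ∑ a ∈ 𝒜, piP P D A d a * CE P (Ypot d a) (evDA D A d a) :=
  CE_eq_sum_of_partition (evD_eq_biUnion_evDA hAsupp d)
    ((pairwise_disjoint_evDA d).set_pairwise _)
    (fun a _ => measurableSet_evDA hD hA d a) hInt
    (fun _ ha _ hω => Yobs_eq_of_mem_evDA Ypot hd ha hω) hpos

theorem sum_piP_eq_one {P : Measure Ω} [IsFiniteMeasure P] (hD : Measurable D) (hA : Measurable A)
    (hAsupp : ∀ ω, A ω ∈ 𝒜) {d : ℕ} (hd : Pr P (evD D d) ≠ 0) :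
    ∑ a ∈ 𝒜, piP P D A d a = 1 := by
  simp only [piP, ← Finset.sum_div, ← Pr_evD_eq_sum hD hA hAsupp, div_self hd]

end Cells

theorem short_regression_decomposition_general
    (P : Measure Ω) [IsProbabilityMeasure P]
    (D : Ω → ℕ) (A : Ω → Fin K → ℕ) (𝒜 : Finset (Fin K → ℕ))
    (Ypot : ℕ → (Fin K → ℕ) → Ω → ℝ)
    (hD : Measurable D) (hA : Measurable A)
    (hAsupp : ∀ ω, A ω ∈ 𝒜) (h𝒜0 : (0 : Fin K → ℕ) ∈ 𝒜)
    (hInt : ∀ d ∈ ({0, 1} : Finset ℕ), ∀ a ∈ 𝒜, Integrable (Ypot d a) P)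
    (hpos : ∀ d ∈ ({0, 1} : Finset ℕ), ∀ a ∈ 𝒜, 0 < Pr P (evDA D A d a))
    :
    CE P (Yobs D A 𝒜 Ypot) (evD D 1) - CE P (Yobs D A 𝒜 Ypot) (evD D 0)
      = (∑ a ∈ 𝒜, piP P D A 1 a *
            CE P (fun ω => Ypot 1 a ω - Ypot 0 a ω) (evDA D A 1 a))
        + (∑ a ∈ 𝒜, (piP P D A 1 a - piP P D A 0 a) *
            (CE P (Ypot 0 a) (evDA D A 0 a) - CE P (Ypot 0 0) (evDA D A 0 0)))
        + (∑ a ∈ 𝒜, piP P D A 1 a *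
            (CE P (Ypot 0 a) (evDA D A 1 a) - CE P (Ypot 0 a) (evDA D A 0 a))) := by
  have h₁ : (1 : ℕ) ∈ ({0, 1} : Finset ℕ) := by simp
  have h₀ : (0 : ℕ) ∈ ({0, 1} : Finset ℕ) := by simp
  have hcell : ∀ d ∈ ({0, 1} : Finset ℕ), ∀ a ∈ 𝒜, Pr P (evDA D A d a) ≠ 0 :=
    fun d hd a ha => (hpos d hd a ha).ne'
  have hgroup : ∀ d ∈ ({0, 1} : Finset ℕ), Pr P (evD D d) ≠ 0 := fun d hd =>
    ((hpos d hd 0 h𝒜0).trans_le (measureReal_mono fun _ h => h.1)).ne'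
  rw [CE_Yobs_evD hD hA hAsupp h₁ (hInt 1 h₁) (hcell 1 h₁),
    CE_Yobs_evD hD hA hAsupp h₀ (hInt 0 h₀) (hcell 0 h₀),
    sum_mul_sub_sum_mul_eq_of_sum_eq_one 𝒜 _ _ _ _ (fun a => CE P (Ypot 0 a) (evDA D A 1 a))
      (CE P (Ypot 0 0) (evDA D A 0 0)) (sum_piP_eq_one hD hA hAsupp (hgroup 1 h₁))
      (sum_piP_eq_one hD hA hAsupp (hgroup 0 h₀))]
  congr 2
  refine Finset.sum_congr rfl fun a ha => ?_
  rw [CE_sub (measurableSet_evDA hD hA 1 a) (hInt 1 h₁ a ha).integrableOn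
    (hInt 0 h₀ a ha).integrableOn]

/-- The short-regression coefficient decomposes, without any independence assumptions, as
Δ_short = Δ_dce^s + Δ_ind^s + Δ_sel^s. -/
theorem short_regression_decomposition
    (P : Measure Ω) [IsProbabilityMeasure P]
    (D : Ω → ℕ) (A : Ω → Fin K → ℕ) (𝒜 : Finset (Fin K → ℕ))
    (Ypot : ℕ → (Fin K → ℕ) → Ω → ℝ)
    (hD : Measurable D) (hA : Measurable A)
    (hDbin : ∀ ω, D ω = 0 ∨ D ω = 1)
    (hAsupp : ∀ ω, A ω ∈ 𝒜) (h𝒜0 : (0 : Fin K → ℕ) ∈ 𝒜)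
    (hInt : ∀ d ∈ ({0, 1} : Finset ℕ), ∀ a ∈ 𝒜, Integrable (Ypot d a) P)
    (hpos : ∀ d ∈ ({0, 1} : Finset ℕ), ∀ a ∈ 𝒜, 0 < Pr P (evDA D A d a))
    :
    CE P (Yobs D A 𝒜 Ypot) (evD D 1) - CE P (Yobs D A 𝒜 Ypot) (evD D 0)
      = (∑ a ∈ 𝒜, piP P D A 1 a *
            CE P (fun ω => Ypot 1 a ω - Ypot 0 a ω) (evDA D A 1 a))
        + (∑ a ∈ 𝒜, (piP P D A 1 a - piP P D A 0 a) *
            (CE P (Ypot 0 a) (evDA D A 0 a) - CE P (Ypot 0 0) (evDA D A 0 0)))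
        + (∑ a ∈ 𝒜, piP P D A 1 a *
            (CE P (Ypot 0 a) (evDA D A 1 a) - CE P (Ypot 0 a) (evDA D A 0 a))) :=
  short_regression_decomposition_general P D A 𝒜 Ypot hD hA hAsupp h𝒜0 hInt hpos
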